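/- arXiv:1406.2024 — 2 statements merged into one kernel-verified Lean document; each statement's English description precedes it below -/
import Mathlib

section
/- Let p be a natural number and define the sequence of real polynomials a_k by a_0(x) = x^p and a_{k+1}(x) = a_k''(x) + (d/dx)(x·a_k(x)). Let 0 < α < 1, let κ be a real number, and define c(x,t) = ∑_{k=0}^∞ a_k(x) · κ^k · t^{k(1−α)} / Γ(k(1−α)+1). Then for every real x and every t ≥ 0, (∂²/∂x²) c(x,t) + (∂/∂x)(x·c(x,t)) = ∑_{k=0}^∞ a_{k+1}(x) · κ^k · t^{k(1−α)} / Γ(k(1−α)+1), where the x-derivatives of the series exist and are computed term by term. -/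
/-!
Every `a_k` has degree at most `p`, and the operator `q ↦ q'' + (X q)'` multiplies a bound on
the coefficients by at most `(p + 1)²`, so `|coeff_i a_k| ≤ (p + 1)^(2k)`. Truncating Euler's
integral at `M` gives `Γ(s + 1) ≥ M^s e^(-M)` for all `M ≥ 0`, so `Γ(kβ + 1)` beats every
geometric sequence and each coefficient series `∑_k coeff_i(a_k) w_k` converges absolutely.
As the degrees are bounded, `∑_k a_k(x) w_k` is then itself a polynomial in `x`, whose
coefficients are these sums, and term-by-term differentiation is differentiation of that
polynomial.
-/

open Real Polynomial

namespace Real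

open MeasureTheory Set in
theorem rpow_mul_exp_neg_le_Gamma_add_one {s M : ℝ} (hs : 0 ≤ s) (hM : 0 ≤ M) :
    M ^ s * exp (-M) ≤ Gamma (s + 1) := by
  have hint : IntegrableOn (fun x => exp (-x) * x ^ s) (Ioi 0) := by
    simpa using GammaIntegral_convergent (s := s + 1) (by linarith)
  calc M ^ s * exp (-M) = ∫ x in Ioi M, exp (-x) * M ^ s := by
        rw [integral_mul_const, integral_exp_neg_Ioi, mul_comm]
    _ ≤ ∫ x in Ioi M, exp (-x) * x ^ s := by
        refine setIntegral_mono_on ((integrableOn_exp_neg_Ioi M).mul_const _)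
          (hint.mono_set (Ioi_subset_Ioi hM)) measurableSet_Ioi fun x hx => ?_
        gcongr
        exact le_of_lt hx
    _ ≤ ∫ x in Ioi 0, exp (-x) * x ^ s :=
        setIntegral_mono_set hint
          ((ae_restrict_iff' measurableSet_Ioi).2
            (ae_of_all _ fun x (hx : 0 < x) => by positivity))
          (Ioi_subset_Ioi hM).eventuallyLE
    _ = Gamma (s + 1) := by rw [Gamma_eq_integral (by linarith), add_sub_cancel_right]

theorem summable_pow_div_Gamma_mul_add_one {β : ℝ} (hβ : 0 < β) (R : ℝ) :
    Summable fun k : ℕ => R ^ k / Gamma (k * β + 1) := by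
  set M := (|R| + 1) ^ β⁻¹
  have hM : 0 ≤ M := by positivity
  have hr : |R| / (|R| + 1) < 1 := (div_lt_one (by positivity)).2 (lt_add_one _)
  refine Summable.of_norm_bounded
    ((summable_geometric_of_lt_one (by positivity) hr).mul_left (exp M)) fun k => ?_
  have hΓ : (|R| + 1) ^ k * exp (-M) ≤ Gamma (k * β + 1) := by
    have h := rpow_mul_exp_neg_le_Gamma_add_one (s := k * β) (by positivity) hM
    rwa [← rpow_mul (by positivity), mul_left_comm, inv_mul_cancel₀ hβ.ne', mul_one,
      rpow_natCast] at h
  have hΓpos : 0 < Gamma (k * β + 1) := lt_of_lt_of_le (by positivity) hΓ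
  rw [norm_div, norm_pow, Real.norm_eq_abs, Real.norm_of_nonneg hΓpos.le, div_pow,
    ← mul_div_assoc, div_le_div_iff₀ hΓpos (by positivity)]
  calc |R| ^ k * (|R| + 1) ^ k = exp M * |R| ^ k * ((|R| + 1) ^ k * exp (-M)) := by
        rw [exp_neg]; field_simp
    _ ≤ exp M * |R| ^ k * Gamma (k * β + 1) := by gcongr

theorem abs_pow_mul_rpow_div_Gamma_le {β : ℝ} (hβ : 0 ≤ β) (κ t : ℝ) (k : ℕ) :
    |κ ^ k * t ^ ((k : ℝ) * β) / Gamma ((k : ℝ) * β + 1)| ≤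
      (|κ| * |t| ^ β) ^ k / Gamma ((k : ℝ) * β + 1) := by
  have hΓ : 0 < Gamma (k * β + 1) := Gamma_pos_of_pos (by positivity)
  rw [abs_div, abs_of_pos hΓ, abs_mul, abs_pow, mul_pow, ← rpow_mul_natCast (abs_nonneg t),
    mul_comm β]
  gcongr
  exact abs_rpow_le_abs_rpow t _

end Real

namespace Polynomial

theorem natDegree_derivative_le_of_le {R : Type*} [Semiring R] {q : R[X]} {d : ℕ}
    (h : q.natDegree ≤ d) : (derivative q).natDegree ≤ d :=
  (natDegree_derivative_le q).trans ((Nat.sub_le _ _).trans h)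

theorem natDegree_X_mul_le_of_le {R : Type*} [Semiring R] {q : R[X]} {d : ℕ}
    (h : q.natDegree ≤ d) : (X * q).natDegree ≤ d + 1 :=
  (natDegree_mul_le_of_le natDegree_X_le h).trans_eq (add_comm _ _)

noncomputable def tsumCoeff (b : ℕ → ℝ[X]) (w : ℕ → ℝ) (d : ℕ) : ℝ[X] :=
  ∑ i ∈ Finset.range (d + 1), C (∑' k, (b k).coeff i * w k) * X ^ i

def CoeffSummable (b : ℕ → ℝ[X]) (w : ℕ → ℝ) : Prop :=
  ∀ i, Summable fun k => (b k).coeff i * w k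

section TermwiseDerivative

variable {b : ℕ → ℝ[X]} {w : ℕ → ℝ} {d : ℕ}

theorem coeff_tsumCoeff (hb : ∀ k, (b k).natDegree ≤ d) (j : ℕ) :
    (tsumCoeff b w d).coeff j = ∑' k, (b k).coeff j * w k := by
  simp only [tsumCoeff, finsetSum_coeff, coeff_C_mul_X_pow, Finset.sum_ite_eq, Finset.mem_range]
  split_ifs with hj
  · rfl
  · have hzero (k : ℕ) : (b k).coeff j = 0 :=
      coeff_eq_zero_of_natDegree_lt ((hb k).trans_lt (by omega))
    simp [hzero]

theorem derivative_tsumCoeff (hb : ∀ k, (b k).natDegree ≤ d) :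
    derivative (tsumCoeff b w d) = tsumCoeff (fun k => derivative (b k)) w d := by
  ext j
  simp only [coeff_derivative, coeff_tsumCoeff hb,
    coeff_tsumCoeff fun k => natDegree_derivative_le_of_le (hb k), ← tsum_mul_right]
  exact tsum_congr fun k => mul_right_comm _ _ _

theorem hasSum_eval_mul (hb : ∀ k, (b k).natDegree ≤ d) (hs : CoeffSummable b w) (z : ℝ) :
    HasSum (fun k => (b k).eval z * w k) ((tsumCoeff b w d).eval z) := by
  have hexpand (k : ℕ) :
      (b k).eval z * w k = ∑ i ∈ Finset.range (d + 1), (b k).coeff i * w k * z ^ i := by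
    rw [eval_eq_sum_range' (Nat.lt_succ_of_le (hb k)), Finset.sum_mul]
    exact Finset.sum_congr rfl fun i _ => mul_right_comm _ _ _
  simp only [hexpand, tsumCoeff, eval_finsetSum, eval_mul, eval_C, eval_pow, eval_X]
  exact hasSum_sum fun i _ => (hs i).hasSum.mul_right _

theorem CoeffSummable.derivative (hs : CoeffSummable b w) :
    CoeffSummable (fun k => derivative (b k)) w := fun i => by
  simpa only [coeff_derivative, mul_right_comm] using (hs (i + 1)).mul_right ((i : ℝ) + 1)

theorem CoeffSummable.X_mul (hs : CoeffSummable b w) : CoeffSummable (fun k => X * b k) w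
  | 0 => by simp
  | i + 1 => by simpa only [coeff_X_mul] using hs i

theorem hasDerivAt_tsum_eval_mul (hb : ∀ k, (b k).natDegree ≤ d) (hs : CoeffSummable b w)
    (y : ℝ) :
    HasDerivAt (fun z => ∑' k, (b k).eval z * w k)
      (∑' k, (derivative (b k)).eval y * w k) y := by
  rw [(hasSum_eval_mul (fun k => natDegree_derivative_le_of_le (hb k)) hs.derivative y).tsum_eq,
    ← derivative_tsumCoeff hb]
  exact ((tsumCoeff b w d).hasDerivAt y).congr_of_eventuallyEq
    (.of_forall fun z => (hasSum_eval_mul hb hs z).tsum_eq)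

end TermwiseDerivative

noncomputable def fokkerPlanckOp {R : Type*} [Semiring R] (q : R[X]) : R[X] :=
  derivative (derivative q) + derivative (X * q)

theorem natDegree_fokkerPlanckOp_le {R : Type*} [Semiring R] (q : R[X]) :
    (fokkerPlanckOp q).natDegree ≤ q.natDegree := by
  have h₁ := natDegree_derivative_le (derivative q)
  have h₂ := natDegree_derivative_le q
  have h₃ := natDegree_derivative_le (X * q)
  have h₄ := natDegree_X_mul_le_of_le (le_refl q.natDegree)
  exact (natDegree_add_le _ _).trans (max_le (by omega) (by omega))

section CoeffBounds

variable {q : ℝ[X]} {d : ℕ} {B : ℝ}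

theorem abs_coeff_derivative_le (hq : q.natDegree ≤ d) (hB : ∀ i, |q.coeff i| ≤ B) (i : ℕ) :
    |(derivative q).coeff i| ≤ d * B := by
  rw [coeff_derivative, abs_mul]
  rcases le_or_gt (i + 1) d with hi | hi
  · rw [mul_comm, abs_of_nonneg (by positivity)]
    exact mul_le_mul (by exact_mod_cast hi) (hB _) (abs_nonneg _) d.cast_nonneg
  · rw [coeff_eq_zero_of_natDegree_lt (hq.trans_lt hi), abs_zero, zero_mul]
    exact mul_nonneg d.cast_nonneg ((abs_nonneg _).trans (hB 0))

theorem abs_coeff_X_mul_le (hB : ∀ i, |q.coeff i| ≤ B) : ∀ i, |(X * q).coeff i| ≤ B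
  | 0 => by simpa using (abs_nonneg _).trans (hB 0)
  | i + 1 => by simpa only [coeff_X_mul] using hB i

theorem abs_coeff_fokkerPlanckOp_le (hq : q.natDegree ≤ d) (hB : ∀ i, |q.coeff i| ≤ B)
    (i : ℕ) : |(fokkerPlanckOp q).coeff i| ≤ ((d : ℝ) + 1) ^ 2 * B := by
  have hB₀ : 0 ≤ B := (abs_nonneg _).trans (hB 0)
  have h₁ := abs_coeff_derivative_le (natDegree_derivative_le_of_le hq)
    (abs_coeff_derivative_le hq hB) i
  have h₂ := abs_coeff_derivative_le (natDegree_X_mul_le_of_le hq) (abs_coeff_X_mul_le hB) i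
  rw [fokkerPlanckOp, coeff_add]
  refine (abs_add_le _ _).trans ?_
  push_cast at h₂
  nlinarith [mul_nonneg d.cast_nonneg hB₀]

end CoeffBounds

variable {a : ℕ → ℝ[X]} {d : ℕ}

theorem natDegree_le_of_eq_fokkerPlanckOp (h₀ : (a 0).natDegree ≤ d)
    (hrec : ∀ k, a (k + 1) = fokkerPlanckOp (a k)) (k : ℕ) : (a k).natDegree ≤ d := by
  induction k with
  | zero => exact h₀
  | succ k ih => exact hrec k ▸ (natDegree_fokkerPlanckOp_le _).trans ih

theorem abs_coeff_le_of_eq_fokkerPlanckOp {B : ℝ} (h₀ : (a 0).natDegree ≤ d)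
    (hB : ∀ i, |(a 0).coeff i| ≤ B) (hrec : ∀ k, a (k + 1) = fokkerPlanckOp (a k)) (k : ℕ)
    (i : ℕ) : |(a k).coeff i| ≤ B * (((d : ℝ) + 1) ^ 2) ^ k := by
  induction k generalizing i with
  | zero => simpa using hB i
  | succ k ih =>
    rw [hrec k]
    exact (abs_coeff_fokkerPlanckOp_le (natDegree_le_of_eq_fokkerPlanckOp h₀ hrec k) ih
      i).trans_eq (by ring)

theorem coeffSummable_of_abs_coeff_le {b : ℕ → ℝ[X]} {B C β : ℝ} (hβ : 0 < β)
    (hb : ∀ k i, |(b k).coeff i| ≤ B * C ^ k) (κ t : ℝ) :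
    CoeffSummable b fun k => κ ^ k * t ^ ((k : ℝ) * β) / Gamma ((k : ℝ) * β + 1) :=
  fun i => by
  refine Summable.of_norm_bounded
    ((summable_pow_div_Gamma_mul_add_one hβ (C * (|κ| * |t| ^ β))).mul_left B) fun k => ?_
  rw [norm_mul, Real.norm_eq_abs, Real.norm_eq_abs, mul_pow, mul_div_assoc, ← mul_assoc]
  exact mul_le_mul (hb k i) (abs_pow_mul_rpow_div_Gamma_le hβ.le κ t k) (abs_nonneg _)
    ((abs_nonneg _).trans (hb k i))

end Polynomial

theorem vim_series_space_derivative_general (p : ℕ) (a : ℕ → Polynomial ℝ)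
    (ha0 : a 0 = Polynomial.X ^ p)
    (harec : ∀ k, a (k + 1) =
      Polynomial.derivative (Polynomial.derivative (a k)) +
        Polynomial.derivative (Polynomial.X * a k))
    (α κ : ℝ) (hα1 : α < 1) (x t : ℝ) :
    (∀ y : ℝ, HasDerivAt
        (fun z : ℝ => ∑' k : ℕ, (a k).eval z *
          (κ ^ k * t ^ ((k : ℝ) * (1 - α)) / Real.Gamma ((k : ℝ) * (1 - α) + 1)))
        (∑' k : ℕ, (Polynomial.derivative (a k)).eval y *
          (κ ^ k * t ^ ((k : ℝ) * (1 - α)) / Real.Gamma ((k : ℝ) * (1 - α) + 1))) y) ∧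
    (∀ y : ℝ, HasDerivAt
        (fun z : ℝ => ∑' k : ℕ, (Polynomial.derivative (a k)).eval z *
          (κ ^ k * t ^ ((k : ℝ) * (1 - α)) / Real.Gamma ((k : ℝ) * (1 - α) + 1)))
        (∑' k : ℕ, (Polynomial.derivative (Polynomial.derivative (a k))).eval y *
          (κ ^ k * t ^ ((k : ℝ) * (1 - α)) / Real.Gamma ((k : ℝ) * (1 - α) + 1))) y) ∧
    (∀ y : ℝ, HasDerivAt
        (fun z : ℝ => z * ∑' k : ℕ, (a k).eval z *
          (κ ^ k * t ^ ((k : ℝ) * (1 - α)) / Real.Gamma ((k : ℝ) * (1 - α) + 1)))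
        (∑' k : ℕ, (Polynomial.derivative (Polynomial.X * a k)).eval y *
          (κ ^ k * t ^ ((k : ℝ) * (1 - α)) / Real.Gamma ((k : ℝ) * (1 - α) + 1))) y) ∧
    ((∑' k : ℕ, (Polynomial.derivative (Polynomial.derivative (a k))).eval x *
        (κ ^ k * t ^ ((k : ℝ) * (1 - α)) / Real.Gamma ((k : ℝ) * (1 - α) + 1))) +
      (∑' k : ℕ, (Polynomial.derivative (Polynomial.X * a k)).eval x *
        (κ ^ k * t ^ ((k : ℝ) * (1 - α)) / Real.Gamma ((k : ℝ) * (1 - α) + 1))) =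
      ∑' k : ℕ, (a (k + 1)).eval x *
        (κ ^ k * t ^ ((k : ℝ) * (1 - α)) / Real.Gamma ((k : ℝ) * (1 - α) + 1))) := by
  have h₀ : (a 0).natDegree ≤ p := ha0 ▸ natDegree_X_pow_le p
  have hB : ∀ i, |(a 0).coeff i| ≤ 1 := fun i => by
    rw [ha0, coeff_X_pow]; split_ifs <;> simp
  have hdeg := natDegree_le_of_eq_fokkerPlanckOp h₀ harec
  have hdeg' k := natDegree_derivative_le_of_le (hdeg k)
  have hXdeg k := natDegree_X_mul_le_of_le (hdeg k)
  have hs := coeffSummable_of_abs_coeff_le (sub_pos.2 hα1)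
    (abs_coeff_le_of_eq_fokkerPlanckOp h₀ hB harec) κ t
  refine ⟨hasDerivAt_tsum_eval_mul hdeg hs, hasDerivAt_tsum_eval_mul hdeg' hs.derivative,
    fun y => ?_, ?_⟩
  · simpa only [eval_mul, eval_X, mul_assoc, tsum_mul_left] using
      hasDerivAt_tsum_eval_mul hXdeg hs.X_mul y
  · rw [← Summable.tsum_add
      (hasSum_eval_mul (fun k => natDegree_derivative_le_of_le (hdeg' k))
        hs.derivative.derivative x).summable
      (hasSum_eval_mul (fun k => natDegree_derivative_le_of_le (hXdeg k))
        hs.X_mul.derivative x).summable]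
    simp only [harec, eval_add, add_mul]

/-- Term-by-term spatial differentiation of the VIM series solution: with
`a_0(x) = x^p`, `a_{k+1} = a_k'' + (x·a_k)'`, `0 < α < 1`, `t ≥ 0`, writing
`w k = κ^k t^{k(1−α)} / Γ(k(1−α)+1)` and `c(y) = ∑_k a_k(y)·w k`, the first and
second `x`-derivatives of `c`, and the derivative of `y·c(y)`, exist and are
computed term by term, and
`(∂²/∂x²) c(x) + (∂/∂x)(x·c(x)) = ∑_k a_{k+1}(x)·w k`. -/
theorem vim_series_space_derivative (p : ℕ) (a : ℕ → Polynomial ℝ)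
    (ha0 : a 0 = Polynomial.X ^ p)
    (harec : ∀ k, a (k + 1) =
      Polynomial.derivative (Polynomial.derivative (a k)) +
        Polynomial.derivative (Polynomial.X * a k))
    (α κ : ℝ) (hα0 : 0 < α) (hα1 : α < 1) (x t : ℝ) (ht : 0 ≤ t) :
    (∀ y : ℝ, HasDerivAt
        (fun z : ℝ => ∑' k : ℕ, (a k).eval z *
          (κ ^ k * t ^ ((k : ℝ) * (1 - α)) / Real.Gamma ((k : ℝ) * (1 - α) + 1)))
        (∑' k : ℕ, (Polynomial.derivative (a k)).eval y *
          (κ ^ k * t ^ ((k : ℝ) * (1 - α)) / Real.Gamma ((k : ℝ) * (1 - α) + 1))) y) ∧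
    (∀ y : ℝ, HasDerivAt
        (fun z : ℝ => ∑' k : ℕ, (Polynomial.derivative (a k)).eval z *
          (κ ^ k * t ^ ((k : ℝ) * (1 - α)) / Real.Gamma ((k : ℝ) * (1 - α) + 1)))
        (∑' k : ℕ, (Polynomial.derivative (Polynomial.derivative (a k))).eval y *
          (κ ^ k * t ^ ((k : ℝ) * (1 - α)) / Real.Gamma ((k : ℝ) * (1 - α) + 1))) y) ∧
    (∀ y : ℝ, HasDerivAt
        (fun z : ℝ => z * ∑' k : ℕ, (a k).eval z *
          (κ ^ k * t ^ ((k : ℝ) * (1 - α)) / Real.Gamma ((k : ℝ) * (1 - α) + 1)))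
        (∑' k : ℕ, (Polynomial.derivative (Polynomial.X * a k)).eval y *
          (κ ^ k * t ^ ((k : ℝ) * (1 - α)) / Real.Gamma ((k : ℝ) * (1 - α) + 1))) y) ∧
    ((∑' k : ℕ, (Polynomial.derivative (Polynomial.derivative (a k))).eval x *
        (κ ^ k * t ^ ((k : ℝ) * (1 - α)) / Real.Gamma ((k : ℝ) * (1 - α) + 1))) +
      (∑' k : ℕ, (Polynomial.derivative (Polynomial.X * a k)).eval x *
        (κ ^ k * t ^ ((k : ℝ) * (1 - α)) / Real.Gamma ((k : ℝ) * (1 - α) + 1))) =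
      ∑' k : ℕ, (a (k + 1)).eval x *
        (κ ^ k * t ^ ((k : ℝ) * (1 - α)) / Real.Gamma ((k : ℝ) * (1 - α) + 1))) :=
  vim_series_space_derivative_general p a ha0 harec α κ hα1 x t
end

section
/- Let 0 < α < 1 and λ > 0 be real numbers, and consider the ratio R(t) = E_{1−α}(λ t^{1−α}) / e^{λ t}, where E_{1−α}(z) = ∑_{k=0}^∞ z^k / Γ(k(1−α)+1). Then as t → ∞: if λ < 1 then R(t) → 0, and if λ > 1 then R(t) → ∞. (In the paper, λ = (p+1)κ, so for κ < 1/(p+1) the fractional solution becomes negligible relative to the conventional solution, while for κ > 1/(p+1) it dominates.) -/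
/-!
Put `μ = 1 - α` and `b = λ ^ (1 / μ)`, so that `λ t ^ μ = (b t) ^ μ`. Up to polynomial factors
`E_μ(w ^ μ)` grows like `e ^ w`: grouping the terms `w ^ (k μ) / Γ(k μ + 1)` by `⌊k μ⌋` (at most
`⌈1 / μ⌉` terms per group) bounds them by the exponential series, `E_μ(w ^ μ) ≤ 2 ⌈1 / μ⌉ w e ^ w`,
while choosing for every `m` one index `k` with `k μ ∈ [m + 1, m + 2)` gives
`E_μ(w ^ μ) ≥ (e ^ w - 1 - w) / w`. Hence the ratio behaves like `e ^ ((b - λ) t)`, and since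
`1 / μ > 1`, `b < λ` exactly when `λ < 1`.
-/

open Real Filter Topology Finset Nat

noncomputable def mittagLeffler (μ z : ℝ) : ℝ :=
  ∑' k : ℕ, z ^ k / Gamma (k * μ + 1)

theorem factorial_le_Gamma_add_one {n : ℕ} {x : ℝ} (hn : 1 ≤ n) (hnx : n ≤ x) :
    (n ! : ℝ) ≤ Gamma (x + 1) := by
  have hn' : (1 : ℝ) ≤ n := mod_cast hn
  rw [← Gamma_nat_eq_factorial]
  exact Gamma_strictMonoOn_Ici.monotoneOn (by simp; linarith) (by simp; linarith) (by linarith)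

theorem Gamma_add_one_le_factorial {n : ℕ} {x : ℝ} (hx : 1 ≤ x) (hxn : x ≤ n) :
    Gamma (x + 1) ≤ n ! := by
  rw [← Gamma_nat_eq_factorial]
  exact Gamma_strictMonoOn_Ici.monotoneOn (by simp; linarith) (by simp; linarith) (by linarith)

theorem factorial_floor_le_two_mul_Gamma_add_one {x : ℝ} (hx : 0 ≤ x) :
    (⌊x⌋₊ ! : ℝ) ≤ 2 * Gamma (x + 1) := by
  rcases lt_or_ge x 1 with hx1 | hx1
  · -- `Γ(x + 1) = Γ(x + 2) / (x + 1)` with `Γ(x + 2) ≥ 1` and `x + 1 < 2`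
    have hG2 : 1 ≤ Gamma (x + 1 + 1) := by
      simpa using factorial_le_Gamma_add_one (n := 1) le_rfl (by simp; linarith)
    rw [Gamma_add_one (by linarith)] at hG2
    rw [Nat.floor_eq_zero.2 hx1, factorial_zero, cast_one]
    nlinarith
  · linarith [factorial_le_Gamma_add_one (Nat.le_floor (by simpa using hx1)) (Nat.floor_le hx)]

theorem rpow_div_Gamma_add_one_le {w x : ℝ} (hw : 1 ≤ w) (hx : 0 ≤ x) :
    w ^ x / Gamma (x + 1) ≤ 2 * w * (w ^ ⌊x⌋₊ / ⌊x⌋₊ !) := by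
  have hpow : w ^ x ≤ w ^ (⌊x⌋₊ + 1) := by
    rw [← rpow_natCast]
    exact rpow_le_rpow_of_exponent_le hw (by push_cast; exact (Nat.lt_floor_add_one x).le)
  calc w ^ x / Gamma (x + 1) ≤ w ^ (⌊x⌋₊ + 1) / (⌊x⌋₊ ! / 2) := by
        gcongr
        linarith [factorial_floor_le_two_mul_Gamma_add_one hx]
    _ = 2 * w * (w ^ ⌊x⌋₊ / ⌊x⌋₊ !) := by
        field_simp
        ring

theorem pow_succ_div_factorial_le_rpow_div_Gamma_add_one {w x : ℝ} {m : ℕ} (hw : 1 ≤ w)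
    (hmx : m + 1 ≤ x) (hxm : x ≤ m + 2) :
    w ^ (m + 1) / (m + 2) ! ≤ w ^ x / Gamma (x + 1) := by
  have hpow : w ^ (m + 1) ≤ w ^ x := by
    rw [← rpow_natCast]
    exact rpow_le_rpow_of_exponent_le hw (by push_cast; exact hmx)
  have hx1 : 1 ≤ x := by linarith [(Nat.cast_nonneg m : (0 : ℝ) ≤ m)]
  gcongr
  exact Gamma_add_one_le_factorial hx1 (by push_cast; exact hxm)

theorem card_filter_floor_mul_eq_le (s : Finset ℕ) {μ : ℝ} (hμ : 0 < μ) (b : ℕ) :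
    #{k ∈ s | ⌊(k : ℕ) * μ⌋₊ = b} ≤ ⌈μ⁻¹⌉₊ := by
  set c := ⌈b / μ⌉₊
  calc #{k ∈ s | ⌊(k : ℕ) * μ⌋₊ = b} ≤ #(Ico c (c + ⌈μ⁻¹⌉₊)) := by
        refine card_le_card fun k hk ↦ ?_
        obtain ⟨hbk, hkb⟩ := (Nat.floor_eq_iff (by positivity)).1 (mem_filter.1 hk).2
        have hkc : (k : ℝ) < c + ⌈μ⁻¹⌉₊ := by
          calc (k : ℝ) < (b + 1) / μ := by rwa [lt_div_iff₀ hμ]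
            _ = b / μ + μ⁻¹ := by ring
            _ ≤ c + ⌈μ⁻¹⌉₊ := add_le_add (Nat.le_ceil _) (Nat.le_ceil _)
        exact mem_Ico.2 ⟨Nat.ceil_le.2 ((div_le_iff₀ hμ).2 hbk), mod_cast hkc⟩
    _ = ⌈μ⁻¹⌉₊ := by simp

theorem sum_range_comp_floor_mul_le {μ : ℝ} (hμ0 : 0 < μ) (hμ1 : μ ≤ 1) {f : ℕ → ℝ}
    (hf : ∀ m, 0 ≤ f m) (n : ℕ) :
    ∑ k ∈ range n, f ⌊k * μ⌋₊ ≤ ⌈μ⁻¹⌉₊ * ∑ m ∈ range n, f m := by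
  have hmaps : ∀ k ∈ range n, ⌊k * μ⌋₊ ∈ range n := fun k hk ↦ by
    refine mem_range.2 (lt_of_le_of_lt ?_ (mem_range.1 hk))
    exact Nat.floor_le_of_le (mul_le_of_le_one_right k.cast_nonneg hμ1)
  rw [← sum_fiberwise_of_maps_to hmaps, mul_sum]
  refine sum_le_sum fun b _ ↦ ?_
  calc ∑ k ∈ range n with ⌊(k : ℕ) * μ⌋₊ = b, f ⌊(k : ℝ) * μ⌋₊
      = #{k ∈ range n | ⌊(k : ℕ) * μ⌋₊ = b} * f b := by
        rw [sum_congr rfl fun k hk ↦ by rw [(mem_filter.1 hk).2], sum_const, nsmul_eq_mul]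
    _ ≤ ⌈μ⁻¹⌉₊ * f b := by
        gcongr
        · exact hf b
        · exact card_filter_floor_mul_eq_le _ hμ0 b

theorem sum_range_rpow_mul_div_Gamma_le {μ w : ℝ} (hμ0 : 0 < μ) (hμ1 : μ ≤ 1) (hw : 1 ≤ w)
    (n : ℕ) :
    ∑ k ∈ range n, w ^ (k * μ) / Gamma (k * μ + 1) ≤ 2 * w * ⌈μ⁻¹⌉₊ * exp w := by
  have hw0 : 0 ≤ w := by linarith
  calc ∑ k ∈ range n, w ^ (k * μ) / Gamma (k * μ + 1)
      ≤ ∑ k ∈ range n, 2 * w * (w ^ ⌊k * μ⌋₊ / ⌊k * μ⌋₊ !) :=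
        sum_le_sum fun k _ ↦ rpow_div_Gamma_add_one_le hw (by positivity)
    _ = 2 * w * ∑ k ∈ range n, w ^ ⌊k * μ⌋₊ / ⌊k * μ⌋₊ ! := (mul_sum ..).symm
    _ ≤ 2 * w * (⌈μ⁻¹⌉₊ * ∑ m ∈ range n, w ^ m / m !) := by
        gcongr
        exact sum_range_comp_floor_mul_le hμ0 hμ1 (f := fun m ↦ w ^ m / m !)
          (fun m ↦ by positivity) n
    _ ≤ 2 * w * ⌈μ⁻¹⌉₊ * exp w := by
        rw [← mul_assoc]
        gcongr
        exact sum_le_exp_of_nonneg hw0 n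

theorem rpow_mul_div_Gamma_nonneg {μ w : ℝ} (hμ : 0 ≤ μ) (hw : 0 ≤ w) (k : ℕ) :
    0 ≤ w ^ (k * μ) / Gamma (k * μ + 1) :=
  div_nonneg (rpow_nonneg hw _) (Gamma_pos_of_pos (by positivity)).le

theorem summable_rpow_mul_div_Gamma {μ w : ℝ} (hμ0 : 0 < μ) (hμ1 : μ ≤ 1) (hw : 1 ≤ w) :
    Summable fun k : ℕ ↦ w ^ (k * μ) / Gamma (k * μ + 1) :=
  summable_of_sum_range_le (rpow_mul_div_Gamma_nonneg hμ0.le (by linarith))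
    (sum_range_rpow_mul_div_Gamma_le hμ0 hμ1 hw)

theorem mittagLeffler_rpow (μ : ℝ) {w : ℝ} (hw : 0 ≤ w) :
    mittagLeffler μ (w ^ μ) = ∑' k : ℕ, w ^ (k * μ) / Gamma (k * μ + 1) := by
  simp only [mittagLeffler, mul_comm _ μ, rpow_mul_natCast hw]

theorem mittagLeffler_nonneg {μ z : ℝ} (hμ : 0 ≤ μ) (hz : 0 ≤ z) : 0 ≤ mittagLeffler μ z :=
  tsum_nonneg fun k ↦ div_nonneg (pow_nonneg hz k) (Gamma_pos_of_pos (by positivity)).le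

theorem mittagLeffler_rpow_le {μ w : ℝ} (hμ0 : 0 < μ) (hμ1 : μ ≤ 1) (hw : 1 ≤ w) :
    mittagLeffler μ (w ^ μ) ≤ 2 * w * ⌈μ⁻¹⌉₊ * exp w := by
  rw [mittagLeffler_rpow μ (by linarith)]
  exact tsum_le_of_sum_range_le (rpow_mul_div_Gamma_nonneg hμ0.le (by linarith))
    (sum_range_rpow_mul_div_Gamma_le hμ0 hμ1 hw)

theorem hasSum_pow_succ_div_factorial_add_two {w : ℝ} (hw : w ≠ 0) :
    HasSum (fun m : ℕ ↦ w ^ (m + 1) / (m + 2) !) ((exp w - 1 - w) / w) := by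
  have hexp : HasSum (fun n ↦ w ^ n / n !) (exp w) := by
    rw [exp_eq_exp_ℝ]
    exact NormedSpace.expSeries_div_hasSum_exp w
  have h := ((hasSum_nat_add_iff' 2).2 hexp).div_const w
  rw [show ∑ i ∈ range 2, w ^ i / i ! = 1 + w by simp [sum_range_succ], ← sub_sub] at h
  have hterm : (fun m : ℕ ↦ w ^ (m + 1) / (m + 2) !) = fun m ↦ w ^ (m + 2) / (m + 2) ! / w :=
    funext fun m ↦ by rw [_root_.pow_succ w (m + 1)]; field_simp
  rwa [hterm]

theorem exp_sub_one_sub_div_le_mittagLeffler_rpow {μ w : ℝ} (hμ0 : 0 < μ) (hμ1 : μ ≤ 1)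
    (hw : 1 ≤ w) : (exp w - 1 - w) / w ≤ mittagLeffler μ (w ^ μ) := by
  set e : ℕ → ℕ := fun m ↦ ⌈(m + 1) / μ⌉₊
  -- the `e m`-th term dominates the `m`-th term of `∑ w ^ (m + 1) / (m + 2)! = (exp w - 1 - w) / w`
  have he_lower (m : ℕ) : (m : ℝ) + 1 ≤ e m * μ :=
    (div_le_iff₀ hμ0).1 (Nat.le_ceil _)
  have he_upper (m : ℕ) : (e m : ℝ) * μ < m + 2 := by
    have hceil : (e m : ℝ) < (m + 1) / μ + 1 := Nat.ceil_lt_add_one (by positivity)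
    have := (mul_lt_mul_iff_left₀ hμ0).2 hceil
    rw [add_mul, div_mul_cancel₀ _ hμ0.ne'] at this
    linarith
  have he_inj : Function.Injective e := fun m m' h ↦ by
    have hfloor (m : ℕ) : ⌊(e m : ℝ) * μ⌋₊ = m + 1 :=
      (Nat.floor_eq_iff (by positivity)).2
        ⟨by push_cast; exact he_lower m, by push_cast; linarith [he_upper m]⟩
    have := hfloor m
    rw [h, hfloor m'] at this
    omega
  rw [mittagLeffler_rpow μ (by linarith),
    ← (hasSum_pow_succ_div_factorial_add_two (by positivity)).tsum_eq]
  refine Summable.tsum_le_tsum_of_inj e he_inj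
    (fun k _ ↦ rpow_mul_div_Gamma_nonneg hμ0.le (by linarith) k)
    (fun m ↦ pow_succ_div_factorial_le_rpow_div_Gamma_add_one hw (he_lower m) (he_upper m).le)
    (hasSum_pow_succ_div_factorial_add_two (by positivity)).summable
    (summable_rpow_mul_div_Gamma hμ0 hμ1 hw)

theorem tendsto_mittagLeffler_rpow_mul_div_exp_nhds_zero {μ b l : ℝ} (hμ0 : 0 < μ) (hμ1 : μ ≤ 1)
    (hb : 0 < b) (hbl : b < l) :
    Tendsto (fun t ↦ mittagLeffler μ ((b * t) ^ μ) / exp (l * t)) atTop (𝓝 0) := by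
  have hlim := (tendsto_rpow_mul_exp_neg_mul_atTop_nhds_zero 1 (l - b) (by linarith)).const_mul
    (2 * b * ⌈μ⁻¹⌉₊)
  rw [mul_zero] at hlim
  refine squeeze_zero' ?_ ?_ hlim
  · filter_upwards [eventually_ge_atTop 0] with t ht
    exact div_nonneg (mittagLeffler_nonneg hμ0.le (by positivity)) (exp_pos _).le
  · filter_upwards [eventually_ge_atTop b⁻¹] with t ht
    have hbt : 1 ≤ b * t := by rwa [inv_le_iff_one_le_mul₀' hb] at ht
    calc mittagLeffler μ ((b * t) ^ μ) / exp (l * t)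
        ≤ 2 * (b * t) * ⌈μ⁻¹⌉₊ * exp (b * t) / exp (l * t) := by
          gcongr
          exact mittagLeffler_rpow_le hμ0 hμ1 hbt
      _ = 2 * b * ⌈μ⁻¹⌉₊ * (t ^ (1 : ℝ) * exp (-(l - b) * t)) := by
          rw [rpow_one, mul_div_assoc, ← exp_sub]
          ring_nf

theorem tendsto_mittagLeffler_rpow_mul_div_exp_atTop {μ b l : ℝ} (hμ0 : 0 < μ) (hμ1 : μ ≤ 1)
    (hb : 0 < b) (hlb : l < b) :
    Tendsto (fun t ↦ mittagLeffler μ ((b * t) ^ μ) / exp (l * t)) atTop atTop := by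
  refine tendsto_atTop_mono' _ ?_
    ((tendsto_exp_mul_div_rpow_atTop 1 (b - l) (by linarith)).const_mul_atTop (by positivity :
      0 < (2 * b)⁻¹))
  filter_upwards [eventually_ge_atTop (3 / b)] with t ht
  have hbt : 3 ≤ b * t := by rwa [div_le_iff₀' hb] at ht
  -- `exp w ≥ 1 + w + w ^ 2 / 2 ≥ 2 * (1 + w)` for `w ≥ 3`
  have hexp : exp (b * t) / 2 ≤ exp (b * t) - 1 - b * t := by
    nlinarith [quadratic_le_exp_of_nonneg (by positivity : 0 ≤ b * t)]
  calc (2 * b)⁻¹ * (exp ((b - l) * t) / t ^ (1 : ℝ))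
      = exp (b * t) / 2 / (b * t) / exp (l * t) := by
        rw [rpow_one, sub_mul, exp_sub]
        field_simp
    _ ≤ (exp (b * t) - 1 - b * t) / (b * t) / exp (l * t) := by gcongr
    _ ≤ mittagLeffler μ ((b * t) ^ μ) / exp (l * t) := by
        gcongr
        exact exp_sub_one_sub_div_le_mittagLeffler_rpow hμ0 hμ1 (by linarith)

/-- Long-time behaviour of the ratio of the fractional to the conventional solution:
for `0 < α < 1`, `λ > 0`, with `R(t) = E_{1−α}(λ t^{1−α}) / e^{λ t}` where
`E_{1−α}(z) = ∑_k z^k / Γ(k(1−α)+1)`, if `λ < 1` then `R(t) → 0` as `t → ∞`,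
and if `λ > 1` then `R(t) → ∞`. -/
theorem fractional_vs_conventional_ratio (α l : ℝ) (hα0 : 0 < α) (hα1 : α < 1)
    (hl : 0 < l) :
    (l < 1 → Filter.Tendsto
      (fun t : ℝ =>
        (∑' k : ℕ, (l * t ^ (1 - α)) ^ k / Real.Gamma ((k : ℝ) * (1 - α) + 1)) /
          Real.exp (l * t))
      Filter.atTop (nhds 0)) ∧
    (1 < l → Filter.Tendsto
      (fun t : ℝ =>
        (∑' k : ℕ, (l * t ^ (1 - α)) ^ k / Real.Gamma ((k : ℝ) * (1 - α) + 1)) /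
          Real.exp (l * t))
      Filter.atTop Filter.atTop) := by
  have hμ0 : 0 < 1 - α := by linarith
  have hμ1 : 1 - α ≤ 1 := by linarith
  have hinv : 1 < (1 - α)⁻¹ := (one_lt_inv₀ hμ0).2 (by linarith)
  set b := l ^ (1 - α)⁻¹
  have hb : 0 < b := rpow_pos_of_pos hl _
  have hratio : (fun t : ℝ ↦ mittagLeffler (1 - α) ((b * t) ^ (1 - α)) / exp (l * t)) =ᶠ[atTop]
      fun t ↦ (∑' k : ℕ, (l * t ^ (1 - α)) ^ k / Gamma (k * (1 - α) + 1)) / exp (l * t) := by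
    filter_upwards [eventually_ge_atTop 0] with t ht
    rw [mul_rpow hb.le ht, ← rpow_mul hl.le, inv_mul_cancel₀ hμ0.ne', rpow_one]
    rfl
  refine ⟨fun hl1 ↦ ?_, fun hl1 ↦ ?_⟩
  · exact (tendsto_mittagLeffler_rpow_mul_div_exp_nhds_zero hμ0 hμ1 hb
      (rpow_lt_self_of_lt_one hl hl1 hinv)).congr' hratio
  · exact (tendsto_mittagLeffler_rpow_mul_div_exp_atTop hμ0 hμ1 hb
      (self_lt_rpow_of_one_lt hl1 hinv)).congr' hratio
end
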